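/- arXiv:math/0311112 — 2 statements merged into one kernel-verified Lean document; each statement's English description precedes it below -/
import Mathlib

section
/- A finite lattice L is distributive if and only if the Alexander dual ideal (H_L)* is generated by squarefree monomials of degree 2; in that case (H_L)* = (x_p y_q : p, q ∈ P, p ≤ q). -/
open MvPolynomial

def JoinIrred {L : Type*} [Preorder L] (p : L) : Prop := ¬ IsLUB {q | q < p} p

section Lat
variable {L : Type*} [Fintype L] [Lattice L] [BoundedOrder L]

open Classical in
noncomputable def supIrr (a : L) : L :=
  (Finset.univ.filter (fun p : L => JoinIrred p ∧ p ≤ a)).sup id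

lemma joinIrred_ne_bot {p : L} (h : JoinIrred p) : p ≠ ⊥ := by
  rintro rfl
  exact h (by rw [show {q : L | q < ⊥} = ∅ from by simp]; exact isLUB_empty)

lemma supIrr_le (a : L) : supIrr a ≤ a := by
  classical
  exact Finset.sup_le fun p hp => (Finset.mem_filter.1 hp).2.2

lemma le_supIrr (a : L) : a ≤ supIrr a := by
  classical
  induction a using WellFoundedLT.induction with
  | _ a IH =>
    by_cases h : JoinIrred a
    · exact Finset.le_sup (f := id) (by simp [supIrr, h])
    · rw [JoinIrred, not_not] at h
      refine h.2 (fun b hb => ?_)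
      refine le_trans (IH b hb) (Finset.sup_mono ?_)
      intro p hp
      simp only [supIrr, Finset.mem_filter, Finset.mem_univ, true_and] at hp ⊢
      exact ⟨hp.1, hp.2.trans hb.le⟩

lemma supIrr_eq (a : L) : supIrr a = a := le_antisymm (supIrr_le a) (le_supIrr a)

lemma joinIrred_prime (hd : ∀ p q r : L, p ⊓ (q ⊔ r) = (p ⊓ q) ⊔ (p ⊓ r))
    {p : L} (hp : JoinIrred p) {a b : L} (h : p ≤ a ⊔ b) : p ≤ a ∨ p ≤ b := by
  have h1 : p = (p ⊓ a) ⊔ (p ⊓ b) := by rw [← hd]; exact (inf_eq_left.2 h).symm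
  by_contra hc
  push_neg at hc
  have ha : p ⊓ a < p := lt_of_le_of_ne inf_le_left (fun e => hc.1 (inf_eq_left.1 e))
  have hb : p ⊓ b < p := lt_of_le_of_ne inf_le_left (fun e => hc.2 (inf_eq_left.1 e))
  exact hp ⟨fun q hq => hq.le, fun u hu => h1.le.trans (sup_le (hu ha) (hu hb))⟩

lemma joinIrred_prime_finset (hd : ∀ p q r : L, p ⊓ (q ⊔ r) = (p ⊓ q) ⊔ (p ⊓ r))
    {p : L} (hp : JoinIrred p) {ι : Type*} {s : Finset ι} {f : ι → L}
    (h : p ≤ s.sup f) : ∃ q ∈ s, p ≤ f q := by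
  classical
  induction s using Finset.induction with
  | empty =>
    simp only [Finset.sup_empty, le_bot_iff] at h
    exact absurd h (joinIrred_ne_bot hp)
  | @insert a s ha IH =>
    rw [Finset.sup_insert] at h
    rcases joinIrred_prime hd hp h with h' | h'
    · exact ⟨_, Finset.mem_insert_self _ _, h'⟩
    · obtain ⟨q, hq, hq'⟩ := IH h'
      exact ⟨q, Finset.mem_insert_of_mem hq, hq'⟩

lemma distrib_of_prime
    (h : ∀ p : L, JoinIrred p → ∀ a b : L, p ≤ a ⊔ b → p ≤ a ∨ p ≤ b) :
    ∀ p q r : L, p ⊓ (q ⊔ r) = (p ⊓ q) ⊔ (p ⊓ r) := by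
  classical
  intro p q r
  refine le_antisymm ?_ (sup_le (inf_le_inf_left _ le_sup_left) (inf_le_inf_left _ le_sup_right))
  conv_lhs => rw [← supIrr_eq (p ⊓ (q ⊔ r))]
  refine Finset.sup_le fun s hs => ?_
  simp only [supIrr, Finset.mem_filter, Finset.mem_univ, true_and] at hs
  obtain ⟨hs1, hs2⟩ := hs
  rcases h s hs1 q r (hs2.trans inf_le_right) with h' | h'
  · exact le_sup_of_le_left (le_inf (hs2.trans inf_le_left) h')
  · exact le_sup_of_le_right (le_inf (hs2.trans inf_le_left) h')

end Lat


section Mon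
variable {σ : Type*} (F : Type*) [Field F] [DecidableEq σ]

noncomputable def ind (T : Finset σ) : σ →₀ ℕ := ∑ s ∈ T, Finsupp.single s 1

lemma ind_apply (T : Finset σ) (s : σ) : ind T s = if s ∈ T then 1 else 0 := by
  simp [ind, Finsupp.finset_sum_apply, Finsupp.single_apply, Finset.sum_ite_eq' T s (fun _ => 1)]

lemma one_le_ind_iff {T : Finset σ} {s : σ} : 1 ≤ ind T s ↔ s ∈ T := by
  rw [ind_apply]; split <;> simp_all

lemma ind_le_iff {T : Finset σ} {μ : σ →₀ ℕ} : ind T ≤ μ ↔ ∀ s ∈ T, 1 ≤ μ s := by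
  rw [Finsupp.le_def]
  constructor
  · intro h s hs
    have := h s
    rwa [ind_apply, if_pos hs] at this
  · intro h s
    rw [ind_apply]
    split
    · exact h s ‹_›
    · exact Nat.zero_le _

lemma ind_le_ind_iff {T T' : Finset σ} : ind T ≤ ind T' ↔ T ⊆ T' := by
  simp only [ind_le_iff, one_le_ind_iff]
  rfl

lemma prodX_eq (T : Finset σ) : (∏ s ∈ T, X s : MvPolynomial σ F) = monomial (ind T) 1 := by
  induction T using Finset.induction with
  | empty => simp [ind]
  | @insert a T ha IH =>
    rw [Finset.prod_insert ha, IH,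
      show ind (insert a T) = Finsupp.single a 1 + ind T from Finset.sum_insert ha,
      show (X a : MvPolynomial σ F) = monomial (Finsupp.single a 1) 1 from rfl,
      monomial_mul, one_mul]

lemma support_prodX (T : Finset σ) :
    (∏ s ∈ T, X s : MvPolynomial σ F).support = {ind T} := by
  classical
  rw [prodX_eq, support_monomial, if_neg one_ne_zero]

lemma ind_pair {a b : σ} (h : a ≠ b) :
    ind ({a, b} : Finset σ) = Finsupp.single a 1 + Finsupp.single b 1 := by
  rw [ind, Finset.sum_pair h]

lemma XmulX_eq (a b : σ) (h : a ≠ b) :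
    (X a * X b : MvPolynomial σ F) = monomial (ind ({a, b} : Finset σ)) 1 := by
  rw [ind_pair h, show (X a : MvPolynomial σ F) = monomial (Finsupp.single a 1) 1 from rfl,
    show (X b : MvPolynomial σ F) = monomial (Finsupp.single b 1) 1 from rfl,
    monomial_mul, one_mul]

end Mon


open Classical in
/-- The squarefree monomial `u_q = (∏_{p ∈ ℓ(q)} x_p)(∏_{p ∈ P∖ℓ(q)} y_p)`;
`x_p` is `X (Sum.inl p)` and `y_p` is `X (Sum.inr p)`. -/
noncomputable def uMon {L : Type*} [Preorder L] [Fintype L] (F : Type*) [Field F] (q : L) :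
    MvPolynomial ({p : L // JoinIrred p} ⊕ {p : L // JoinIrred p}) F :=
  ∏ p : {p : L // JoinIrred p},
    if (p : L) ≤ q then X (Sum.inl p) else X (Sum.inr p)

open Classical in
/-- The *Alexander dual* of a squarefree monomial ideal `I`: the ideal generated by all
squarefree monomials whose support meets the support of every squarefree monomial in `I`
(equivalently, of every minimal monomial generator of `I`). -/
noncomputable def dualIdeal {σ F : Type*} [Field F] (I : Ideal (MvPolynomial σ F)) :
    Ideal (MvPolynomial σ F) :=
  Ideal.span {m | ∃ T : Finset σ, m = ∏ s ∈ T, X s ∧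
    ∀ T' : Finset σ, (∏ s ∈ T', X s : MvPolynomial σ F) ∈ I → (T ∩ T').Nonempty}

section Bridge
open Classical
variable {L : Type*} [Fintype L] [Lattice L] [BoundedOrder L]

open Classical in
noncomputable def Tq (q : L) : Finset ({p : L // JoinIrred p} ⊕ {p : L // JoinIrred p}) :=
  Finset.univ.image
    (fun p : {p : L // JoinIrred p} => if (p : L) ≤ q then Sum.inl p else Sum.inr p)

lemma mem_Tq_inl {q : L} {p : {p : L // JoinIrred p}} : Sum.inl p ∈ Tq q ↔ (p : L) ≤ q := by
  classical
  simp only [Tq, Finset.mem_image, Finset.mem_univ, true_and]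
  constructor
  · rintro ⟨p', hp'⟩
    split at hp' <;> simp_all
  · intro h
    exact ⟨p, by simp [h]⟩

lemma mem_Tq_inr {q : L} {p : {p : L // JoinIrred p}} : Sum.inr p ∈ Tq q ↔ ¬ (p : L) ≤ q := by
  classical
  simp only [Tq, Finset.mem_image, Finset.mem_univ, true_and]
  constructor
  · rintro ⟨p', hp'⟩
    split at hp' <;> simp_all
  · intro h
    exact ⟨p, by simp [h]⟩

variable (F : Type*) [Field F]

lemma uMon_eq (q : L) : uMon F q = monomial (ind (Tq q)) 1 := by
  classical
  rw [uMon, ← prodX_eq, Tq]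
  rw [Finset.prod_image]
  · refine Finset.prod_congr rfl fun p _ => ?_
    split <;> simp_all
  · intro p _ p' _ h
    beta_reduce at h
    split at h <;> split at h <;> simp_all

lemma range_uMon :
    Set.range (fun q : L => uMon F q)
      = (fun n => monomial n (1 : F)) '' {n | ∃ q : L, n = ind (Tq q)} := by
  ext m
  constructor
  · rintro ⟨q, rfl⟩
    exact ⟨ind (Tq q), ⟨q, rfl⟩, (uMon_eq F q).symm⟩
  · rintro ⟨n, ⟨q, rfl⟩, rfl⟩
    exact ⟨q, uMon_eq F q⟩

lemma prodX_mem_HL_iff {T' : Finset ({p : L // JoinIrred p} ⊕ {p : L // JoinIrred p})} :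
    (∏ s ∈ T', X s : MvPolynomial _ F) ∈ Ideal.span (Set.range (fun q : L => uMon F q))
      ↔ ∃ q : L, Tq q ⊆ T' := by
  classical
  rw [range_uMon, mem_ideal_span_monomial_image]
  simp only [support_prodX, Finset.mem_singleton, forall_eq, Set.mem_setOf_eq]
  constructor
  · rintro ⟨n, ⟨q, rfl⟩, h⟩
    exact ⟨q, ind_le_ind_iff.1 h⟩
  · rintro ⟨q, h⟩
    exact ⟨ind (Tq q), ⟨q, rfl⟩, ind_le_ind_iff.2 h⟩

/-- `T` is a transversal: it meets the support of every generator `u_q`. -/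
def Transv (T : Finset ({p : L // JoinIrred p} ⊕ {p : L // JoinIrred p})) : Prop :=
  ∀ q : L, ∃ x, x ∈ T ∧ x ∈ Tq q

lemma trans_iff (T : Finset ({p : L // JoinIrred p} ⊕ {p : L // JoinIrred p})) :
    (∀ T', (∏ s ∈ T', X s : MvPolynomial _ F) ∈
        Ideal.span (Set.range (fun q : L => uMon F q)) → ∃ x, x ∈ T ∧ x ∈ T')
      ↔ Transv T := by
  constructor
  · intro h q
    refine h (Tq q) (Ideal.subset_span ⟨q, ?_⟩)
    show uMon F q = ∏ s ∈ Tq q, X s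
    rw [uMon_eq, prodX_eq]
  · intro h T' hT'
    obtain ⟨q, hq⟩ := (prodX_mem_HL_iff F).1 hT'
    obtain ⟨x, hx1, hx2⟩ := h q
    exact ⟨x, hx1, hq hx2⟩

lemma dual_eq :
    dualIdeal (Ideal.span (Set.range (fun q : L => uMon F q)))
      = Ideal.span ((fun n => monomial n (1 : F)) '' {n | ∃ T, n = ind T ∧ Transv T}) := by
  rw [dualIdeal]
  congr 1
  ext m
  simp only [Finset.Nonempty, Finset.mem_inter]
  constructor
  · rintro ⟨T, rfl, hT⟩
    refine ⟨ind T, ⟨T, rfl, (trans_iff F T).1 ?_⟩, (prodX_eq F T).symm⟩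
    intro T' hT'
    obtain ⟨x, hx⟩ := hT T' hT'
    exact ⟨x, hx⟩
  · rintro ⟨n, ⟨T, rfl, hT⟩, rfl⟩
    refine ⟨T, (prodX_eq F T).symm, fun T' hT' => ?_⟩
    obtain ⟨x, hx1, hx2⟩ := (trans_iff F T).2 hT T' hT'
    exact ⟨x, hx1, hx2⟩

lemma mem_dual_iff {x : MvPolynomial ({p : L // JoinIrred p} ⊕ {p : L // JoinIrred p}) F} :
    x ∈ dualIdeal (Ideal.span (Set.range (fun q : L => uMon F q)))
      ↔ ∀ μ ∈ x.support, ∃ T, Transv T ∧ ind T ≤ μ := by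
  rw [dual_eq, mem_ideal_span_monomial_image]
  constructor
  · intro h μ hμ
    obtain ⟨n, ⟨T, rfl, hT⟩, hle⟩ := h μ hμ
    exact ⟨T, hT, hle⟩
  · intro h μ hμ
    obtain ⟨T, hT, hle⟩ := h μ hμ
    exact ⟨ind T, ⟨T, rfl, hT⟩, hle⟩

lemma pair_trans {p q : {p : L // JoinIrred p}} (h : (p : L) ≤ q) :
    Transv ({Sum.inl p, Sum.inr q} :
      Finset ({p : L // JoinIrred p} ⊕ {p : L // JoinIrred p})) := by
  classical
  intro r
  by_cases hr : (p : L) ≤ r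
  · exact ⟨Sum.inl p, by simp, mem_Tq_inl.2 hr⟩
  · exact ⟨Sum.inr q, by simp, mem_Tq_inr.2 fun hq => hr (h.trans hq)⟩

lemma trans_pair_of_distrib (hd : ∀ p q r : L, p ⊓ (q ⊔ r) = (p ⊓ q) ⊔ (p ⊓ r))
    {T : Finset ({p : L // JoinIrred p} ⊕ {p : L // JoinIrred p})} (hT : Transv T) :
    ∃ p q : {p : L // JoinIrred p}, (p : L) ≤ q ∧ Sum.inl p ∈ T ∧ Sum.inr q ∈ T := by
  classical
  set s := Finset.univ.filter (fun q : {p : L // JoinIrred p} => Sum.inr q ∈ T) with hs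
  obtain ⟨x, hx1, hx2⟩ := hT (s.sup (fun q => (q : L)))
  have hx : x ∈ T ∧ x ∈ Tq (s.sup (fun q : {p : L // JoinIrred p} => (q : L))) := ⟨hx1, hx2⟩
  rcases x with p | q
  · rw [mem_Tq_inl] at hx
    obtain ⟨q, hq, hpq⟩ := joinIrred_prime_finset hd p.2 hx.2
    rw [hs, Finset.mem_filter] at hq
    exact ⟨p, q, hpq, hx.1, hq.2⟩
  · rw [mem_Tq_inr] at hx
    exact absurd (Finset.le_sup (f := fun q : {p : L // JoinIrred p} => (q : L))
      (by rw [hs, Finset.mem_filter]; exact ⟨Finset.mem_univ _, hx.1⟩)) hx.2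

end Bridge

section Main
open Classical
variable {L : Type*} [Fintype L] [Lattice L] [BoundedOrder L] (F : Type*) [Field F]

lemma le_of_irr_le {a r : L} (h : ∀ x : L, JoinIrred x → x ≤ a → x ≤ r) : a ≤ r := by
  conv_lhs => rw [← supIrr_eq a]
  rw [supIrr]
  refine Finset.sup_le fun x hx => ?_
  rw [Finset.mem_filter] at hx
  exact h x hx.2.1 hx.2.2

lemma pairSet_eq :
    {m : MvPolynomial ({p : L // JoinIrred p} ⊕ {p : L // JoinIrred p}) F |
        ∃ p q : {p : L // JoinIrred p}, (p : L) ≤ (q : L) ∧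
          m = X (Sum.inl p) * X (Sum.inr q)}
      = (fun n => monomial n (1 : F)) ''
        {n | ∃ p q : {p : L // JoinIrred p}, (p : L) ≤ (q : L) ∧
          n = ind ({Sum.inl p, Sum.inr q} :
            Finset ({p : L // JoinIrred p} ⊕ {p : L // JoinIrred p}))} := by
  ext m
  constructor
  · rintro ⟨p, q, hpq, rfl⟩
    exact ⟨_, ⟨p, q, hpq, rfl⟩, (XmulX_eq F _ _ Sum.inl_ne_inr).symm⟩
  · rintro ⟨n, ⟨p, q, hpq, rfl⟩, rfl⟩
    exact ⟨p, q, hpq, (XmulX_eq F _ _ Sum.inl_ne_inr).symm⟩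

lemma main_eq (hd : ∀ p q r : L, p ⊓ (q ⊔ r) = (p ⊓ q) ⊔ (p ⊓ r)) :
    dualIdeal (Ideal.span (Set.range (fun q : L => uMon F q)))
      = Ideal.span {m | ∃ p q : {p : L // JoinIrred p}, (p : L) ≤ (q : L) ∧
          m = X (Sum.inl p) * X (Sum.inr q)} := by
  rw [dual_eq, pairSet_eq]
  apply le_antisymm
  · rw [Ideal.span_le]
    rintro m ⟨n, ⟨T, rfl, hT⟩, rfl⟩
    rw [SetLike.mem_coe, mem_ideal_span_monomial_image]
    intro xi hxi
    rw [support_monomial, if_neg one_ne_zero, Finset.mem_singleton] at hxi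
    subst hxi
    obtain ⟨p, q, hpq, h1, h2⟩ := trans_pair_of_distrib hd hT
    refine ⟨ind ({Sum.inl p, Sum.inr q}), ⟨p, q, hpq, rfl⟩, ind_le_ind_iff.2 ?_⟩
    exact Finset.insert_subset h1 (Finset.singleton_subset_iff.2 h2)
  · rw [Ideal.span_le]
    rintro m ⟨n, ⟨p, q, hpq, rfl⟩, rfl⟩
    rw [SetLike.mem_coe, mem_ideal_span_monomial_image]
    intro xi hxi
    rw [support_monomial, if_neg one_ne_zero, Finset.mem_singleton] at hxi
    subst hxi
    exact ⟨_, ⟨{Sum.inl p, Sum.inr q}, rfl, pair_trans hpq⟩, le_rfl⟩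

lemma quad_mem_dual {g : MvPolynomial ({p : L // JoinIrred p} ⊕ {p : L // JoinIrred p}) F}
    (hg : g ∈ dualIdeal (Ideal.span (Set.range (fun q : L => uMon F q))))
    {s t : ({p : L // JoinIrred p} ⊕ {p : L // JoinIrred p})} (hst : s ≠ t)
    (hgeq : g = X s * X t) :
    ∃ p q : {p : L // JoinIrred p}, (p : L) ≤ (q : L) ∧
      ({s, t} : Finset _) = {Sum.inl p, Sum.inr q} := by
  rw [hgeq, XmulX_eq F s t hst, mem_dual_iff] at hg
  obtain ⟨T, hT, hle⟩ := hg (ind {s, t})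
    (by rw [support_monomial, if_neg one_ne_zero]; exact Finset.mem_singleton_self _)
  have hsub : T ⊆ {s, t} := ind_le_ind_iff.1 hle
  obtain ⟨x1, hx1T, hx1⟩ := hT ⊤
  obtain ⟨x2, hx2T, hx2⟩ := hT ⊥
  obtain ⟨p, rfl⟩ : ∃ p, x1 = Sum.inl p := by
    rcases x1 with p | p
    · exact ⟨p, rfl⟩
    · rw [mem_Tq_inr] at hx1; exact absurd le_top hx1
  obtain ⟨q, rfl⟩ : ∃ q, x2 = Sum.inr q := by
    rcases x2 with p' | q
    · rw [mem_Tq_inl, le_bot_iff] at hx2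
      exact absurd hx2 (joinIrred_ne_bot p'.2)
    · exact ⟨q, rfl⟩
  have hm1 : Sum.inl p ∈ ({s, t} : Finset _) := hsub hx1T
  have hm2 : Sum.inr q ∈ ({s, t} : Finset _) := hsub hx2T
  have hset : ({Sum.inl p, Sum.inr q} : Finset _) = {s, t} := by
    refine Finset.eq_of_subset_of_card_le
      (Finset.insert_subset hm1 (Finset.singleton_subset_iff.2 hm2)) ?_
    rw [Finset.card_pair hst, Finset.card_pair Sum.inl_ne_inr]
  obtain ⟨x3, hx3T, hx3⟩ := hT q
  have hx3m : x3 ∈ ({Sum.inl p, Sum.inr q} : Finset _) := by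
    rw [hset]; exact hsub hx3T
  have hpq : (p : L) ≤ q := by
    rcases Finset.mem_insert.1 hx3m with rfl | hx3m
    · exact mem_Tq_inl.1 hx3
    · rw [Finset.mem_singleton] at hx3m
      subst hx3m
      exact absurd le_rfl (mem_Tq_inr.1 hx3)
  exact ⟨p, q, hpq, hset.symm⟩

lemma prime_of_quad
    (G : Set (MvPolynomial ({p : L // JoinIrred p} ⊕ {p : L // JoinIrred p}) F))
    (hGq : ∀ m ∈ G, ∃ s t : ({p : L // JoinIrred p} ⊕ {p : L // JoinIrred p}),
      s ≠ t ∧ m = X s * X t)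
    (hGs : dualIdeal (Ideal.span (Set.range (fun q : L => uMon F q))) = Ideal.span G) :
    ∀ p : L, JoinIrred p → ∀ a b : L, p ≤ a ⊔ b → p ≤ a ∨ p ≤ b := by
  intro p hp a b hab
  set E : Set (({p : L // JoinIrred p} ⊕ {p : L // JoinIrred p}) →₀ ℕ) :=
    {n | monomial n (1 : F) ∈ G} with hE
  have hGE : G = (fun n => monomial n (1 : F)) '' E := by
    apply Set.Subset.antisymm
    · intro m hm
      obtain ⟨s, t, hst, rfl⟩ := hGq m hm
      rw [XmulX_eq F s t hst] at hm ⊢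
      exact ⟨_, hm, rfl⟩
    · rintro m ⟨n, hn, rfl⟩
      exact hn
  set T' : Finset ({p : L // JoinIrred p} ⊕ {p : L // JoinIrred p}) :=
    insert (Sum.inl (⟨p, hp⟩ : {p : L // JoinIrred p}))
      ((Finset.univ.filter
        (fun q : {p : L // JoinIrred p} => (q : L) ≤ a ∨ (q : L) ≤ b)).image Sum.inr)
    with hT'
  have hTrans : Transv T' := by
    intro r
    by_cases hpr : p ≤ r
    · exact ⟨Sum.inl ⟨p, hp⟩, Finset.mem_insert_self _ _, mem_Tq_inl.2 hpr⟩
    · have hnall : ¬ ∀ q : {p : L // JoinIrred p},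
          ((q : L) ≤ a ∨ (q : L) ≤ b) → (q : L) ≤ r := by
        intro hall
        apply hpr
        refine hab.trans (sup_le ?_ ?_)
        · exact le_of_irr_le fun x hx hxa => hall ⟨x, hx⟩ (Or.inl hxa)
        · exact le_of_irr_le fun x hx hxb => hall ⟨x, hx⟩ (Or.inr hxb)
      push_neg at hnall
      obtain ⟨q, hq1, hq2⟩ := hnall
      exact ⟨Sum.inr q, Finset.mem_insert_of_mem
        (Finset.mem_image_of_mem _ (Finset.mem_filter.2 ⟨Finset.mem_univ _, hq1⟩)),
        mem_Tq_inr.2 hq2⟩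
  have hmem : (monomial (ind T') (1 : F)) ∈
      dualIdeal (Ideal.span (Set.range (fun q : L => uMon F q))) := by
    rw [mem_dual_iff]
    intro μ hμ
    rw [support_monomial, if_neg one_ne_zero, Finset.mem_singleton] at hμ
    subst hμ
    exact ⟨T', hTrans, le_rfl⟩
  rw [hGs, hGE, mem_ideal_span_monomial_image] at hmem
  obtain ⟨n, hnE, hle⟩ := hmem (ind T')
    (by rw [support_monomial, if_neg one_ne_zero]; exact Finset.mem_singleton_self _)
  obtain ⟨s, t, hst, hgeq⟩ := hGq _ hnE
  have hgdual : (monomial n (1 : F)) ∈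
      dualIdeal (Ideal.span (Set.range (fun q : L => uMon F q))) := by
    rw [hGs]
    exact Ideal.subset_span hnE
  obtain ⟨p', q', hpq', hset⟩ := quad_mem_dual F hgdual hst hgeq
  have hn : n = ind ({s, t} : Finset _) := by
    have h := hgeq
    rw [XmulX_eq F s t hst] at h
    exact monomial_left_injective one_ne_zero h
  rw [hn, hset] at hle
  have hsub : ({Sum.inl p', Sum.inr q'} : Finset _) ⊆ T' := ind_le_ind_iff.1 hle
  have h1 : Sum.inl p' ∈ T' := hsub (Finset.mem_insert_self _ _)
  have h2 : Sum.inr q' ∈ T' :=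
    hsub (Finset.mem_insert_of_mem (Finset.mem_singleton_self _))
  have hp' : (p' : L) = p := by
    rw [hT', Finset.mem_insert] at h1
    rcases h1 with h1 | h1
    · rw [Sum.inl.injEq] at h1
      exact congrArg Subtype.val h1
    · exfalso
      obtain ⟨x, -, hx⟩ := Finset.mem_image.1 h1
      exact Sum.inr_ne_inl hx
  have hq' : (q' : L) ≤ a ∨ (q' : L) ≤ b := by
    rw [hT', Finset.mem_insert] at h2
    rcases h2 with h2 | h2
    · exact absurd h2 Sum.inr_ne_inl
    · obtain ⟨x, hxmem, hx⟩ := Finset.mem_image.1 h2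
      rw [Sum.inr.injEq] at hx
      subst hx
      exact (Finset.mem_filter.1 hxmem).2
  rcases hq' with h | h
  · exact Or.inl (le_trans (hp' ▸ hpq') h)
  · exact Or.inr (le_trans (hp' ▸ hpq') h)

end Main

/-- Corollary 1.8: a finite lattice `L` is distributive if and only if the Alexander dual
`(H_L)*` is generated by squarefree monomials of degree `2` (i.e. `(Δ_L)^∨` is flag); and
in that case `(H_L)* = (x_p y_q : p, q ∈ P, p ≤ q)`. -/
theorem stmt8 {L : Type*} [Fintype L] [Lattice L] [BoundedOrder L]
    (F : Type*) [Field F] :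
    ((∀ p q r : L, p ⊓ (q ⊔ r) = (p ⊓ q) ⊔ (p ⊓ r)) ↔
      ∃ G : Set (MvPolynomial ({p : L // JoinIrred p} ⊕ {p : L // JoinIrred p}) F),
        (∀ m ∈ G, ∃ s t : ({p : L // JoinIrred p} ⊕ {p : L // JoinIrred p}),
          s ≠ t ∧ m = X s * X t) ∧
        dualIdeal (Ideal.span (Set.range (fun q : L => uMon F q))) = Ideal.span G) ∧
    ((∀ p q r : L, p ⊓ (q ⊔ r) = (p ⊓ q) ⊔ (p ⊓ r)) →
      dualIdeal (Ideal.span (Set.range (fun q : L => uMon F q))) =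
        Ideal.span {m | ∃ p q : {p : L // JoinIrred p}, (p : L) ≤ (q : L) ∧
          m = X (Sum.inl p) * X (Sum.inr q)}) := by
  constructor
  · constructor
    · intro hd
      refine ⟨{m | ∃ p q : {p : L // JoinIrred p}, (p : L) ≤ (q : L) ∧
          m = X (Sum.inl p) * X (Sum.inr q)}, ?_, main_eq F hd⟩
      rintro m ⟨p, q, hpq, rfl⟩
      exact ⟨Sum.inl p, Sum.inr q, Sum.inl_ne_inr, rfl⟩
    · rintro ⟨G, h1, h2⟩
      exact distrib_of_prime (prime_of_quad F G h1 h2)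
  · exact main_eq F
end

section
/- Let L be a finite distributive lattice, P ⊆ L its poset of join-irreducible elements, and I ⊆ L a poset ideal of L. Then (H_I)* = (H_L)* + ( ∏_{r ∈ G(ℓ(q))} y_r : q ∈ L∖I ), where G(ℓ(q)) denotes the set of maximal elements of the poset ideal ℓ(q) ⊆ P. -/
open MvPolynomial

open Classical in
/-- The squarefree monomial `∏_{r ∈ G(ℓ(q))} y_r`, where `G(ℓ(q))` is the set of maximal
elements (generators) of the poset ideal `ℓ(q) ⊆ P`. -/
noncomputable def yGen {L : Type*} [Preorder L] [Fintype L] (F : Type*) [Field F] (q : L) :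
    MvPolynomial ({p : L // JoinIrred p} ⊕ {p : L // JoinIrred p}) F :=
  ∏ r : {p : L // JoinIrred p},
    if ((r : L) ≤ q ∧ ∀ r' : {p : L // JoinIrred p}, (r' : L) ≤ q → r ≤ r' → r' = r)
    then X (Sum.inr r) else 1

/-! ### Auxiliary order-theoretic lemmas -/

section OrderAux
variable {L : Type*} [DistribLattice L]

lemma StmtAux.joinIrred_le_sup {p a b : L} (hp : JoinIrred p) (h : p ≤ a ⊔ b) :
    p ≤ a ∨ p ≤ b := by
  by_contra hc
  push_neg at hc
  refine hp ⟨fun r hr => hr.le, fun w hw => ?_⟩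
  have h1 : p ⊓ a < p := lt_of_le_of_ne inf_le_left fun he => hc.1 (inf_eq_left.mp he)
  have h2 : p ⊓ b < p := lt_of_le_of_ne inf_le_left fun he => hc.2 (inf_eq_left.mp he)
  calc p = p ⊓ (a ⊔ b) := (inf_eq_left.mpr h).symm
    _ = (p ⊓ a) ⊔ (p ⊓ b) := inf_sup_left p a b
    _ ≤ w := sup_le (hw h1) (hw h2)

lemma StmtAux.joinIrred_le_sup' {ι : Type*} {S : Finset ι} (hS : S.Nonempty) (f : ι → L) {p : L}
    (hp : JoinIrred p) (h : p ≤ S.sup' hS f) : ∃ s ∈ S, p ≤ f s := by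
  have := Finset.sup'_induction (p := fun x => p ≤ x → ∃ s ∈ S, p ≤ f s) hS f
    (fun a ha b hb hab => by
      rcases StmtAux.joinIrred_le_sup hp hab with h' | h'
      · exact ha h'
      · exact hb h')
    (fun b hb hpb => ⟨b, hb, hpb⟩)
  exact this h

variable [Fintype L]

lemma StmtAux.birkhoff {q w : L} (hw : ∀ p : L, JoinIrred p → p ≤ q → p ≤ w) : q ≤ w := by
  have wf : WellFounded ((· < ·) : L → L → Prop) := (Finite.to_wellFoundedLT).wf
  induction q using wf.induction with
  | _ q IH =>
    by_cases hq : JoinIrred q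
    · exact hw q hq le_rfl
    · rw [JoinIrred, not_not] at hq
      exact hq.2 fun r hr => IH r hr fun p hp hpl => hw p hp (hpl.trans hr.le)

lemma StmtAux.exists_max (q : L) (p : {p : L // JoinIrred p}) (hp : (p : L) ≤ q) :
    ∃ r : {p : L // JoinIrred p}, (r : L) ≤ q ∧ p ≤ r ∧
      ∀ r' : {p : L // JoinIrred p}, (r' : L) ≤ q → r ≤ r' → r' = r := by
  obtain ⟨a, ha, hmax⟩ := Set.Finite.exists_maximalFor (fun r : {p : L // JoinIrred p} => (r : L))
    {r : {p : L // JoinIrred p} | (r : L) ≤ q ∧ p ≤ r} (Set.toFinite _) ⟨p, hp, le_rfl⟩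
  exact ⟨a, ha.1, ha.2, fun r' h1 h2 => Subtype.ext (le_antisymm (hmax (j := r') ⟨h1, ha.2.trans h2⟩ h2) h2)⟩

end OrderAux

/-! ### Auxiliary monomial lemmas -/

noncomputable section MonAux
open Classical

namespace StmtAux

variable {σ F : Type*} [Field F]

lemma mem_inter'' {α : Type*} {inst : DecidableEq α} {a : α} {s t : Finset α} :
    a ∈ @Inter.inter _ (@Finset.instInter α inst) s t ↔ a ∈ s ∧ a ∈ t := Finset.mem_inter

def ind (T : Finset σ) : σ →₀ ℕ := ∑ s ∈ T, Finsupp.single s 1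

lemma ind_apply (T : Finset σ) (s : σ) : ind T s = if s ∈ T then 1 else 0 := by
  classical
  simp [ind, Finsupp.finset_sum_apply, Finsupp.single_apply]

lemma ind_le {A B : Finset σ} : ind A ≤ ind B ↔ A ⊆ B := by
  constructor
  · intro h s hs
    have := h s
    rw [ind_apply, ind_apply, if_pos hs] at this
    by_contra hB
    rw [if_neg hB] at this
    omega
  · intro h s
    rw [ind_apply, ind_apply]
    split_ifs with h1 h2
    · exact le_rfl
    · exact absurd (h h1) h2
    · omega
    · exact le_rfl

lemma prod_X_eq (T : Finset σ) : (∏ s ∈ T, X s : MvPolynomial σ F) = monomial (ind T) 1 := by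
  classical
  induction T using Finset.induction with
  | empty => simp [ind]
  | insert _ _ h ih =>
    rw [Finset.prod_insert h, ih]
    rw [show (ind (insert _ _) : σ →₀ ℕ) = Finsupp.single _ 1 + ind _ from Finset.sum_insert h]
    rw [X, monomial_mul, one_mul]

lemma prod_X_mem_span_iff {M : Set (Finset σ)} {T : Finset σ} :
    (∏ s ∈ T, X s : MvPolynomial σ F) ∈
        Ideal.span ((fun A => ∏ s ∈ A, X s : Finset σ → MvPolynomial σ F) '' M) ↔
      ∃ A ∈ M, A ⊆ T := by
  have himg : ((fun A => ∏ s ∈ A, X s : Finset σ → MvPolynomial σ F) '' M)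
      = (fun i => monomial i (1 : F)) '' (ind '' M) := by
    rw [Set.image_image]
    exact Set.image_congr fun A _ => prod_X_eq A
  rw [himg, prod_X_eq, mem_ideal_span_monomial_image]
  rw [support_monomial, if_neg (one_ne_zero : (1:F) ≠ 0)]
  constructor
  · intro h
    obtain ⟨si, ⟨A, hA, rfl⟩, hle⟩ := h (ind T) (Finset.mem_singleton_self _)
    exact ⟨A, hA, ind_le.mp hle⟩
  · rintro ⟨A, hA, hsub⟩ xi hxi
    rw [Finset.mem_singleton] at hxi
    subst hxi
    exact ⟨ind A, ⟨A, hA, rfl⟩, ind_le.mpr hsub⟩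

variable {L : Type*} [Preorder L] [Fintype L]

local notation "PP" => {p : L // JoinIrred p}

def sFin (q : L) : Finset (PP ⊕ PP) :=
  Finset.univ.image (fun p : PP => if (p : L) ≤ q then Sum.inl p else Sum.inr p)

lemma inl_mem_sFin {p : PP} {q : L} : Sum.inl p ∈ sFin q ↔ (p : L) ≤ q := by
  simp only [sFin, Finset.mem_image, Finset.mem_univ, true_and]
  constructor
  · rintro ⟨p', hp'⟩
    split_ifs at hp' with h <;> simp_all
  · intro h; exact ⟨p, by rw [if_pos h]⟩

lemma inr_mem_sFin {p : PP} {q : L} : Sum.inr p ∈ sFin q ↔ ¬ (p : L) ≤ q := by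
  simp only [sFin, Finset.mem_image, Finset.mem_univ, true_and]
  constructor
  · rintro ⟨p', hp'⟩
    split_ifs at hp' with h <;> simp_all
  · intro h; exact ⟨p, by rw [if_neg h]⟩

variable (F) in
lemma uMon_eq (q : L) : uMon F q = ∏ s ∈ sFin q, X s := by
  rw [sFin, Finset.prod_image, uMon]
  · exact Finset.prod_congr rfl fun p _ =>
      (apply_ite (X : PP ⊕ PP → MvPolynomial (PP ⊕ PP) F) _ _ _).symm
  · intro a _ b _ h
    simp only at h
    split_ifs at h <;> simp_all

def genSet (q : L) : Finset PP :=
  Finset.univ.filter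
    (fun r : PP => (r : L) ≤ q ∧ ∀ r' : PP, (r' : L) ≤ q → r ≤ r' → r' = r)

variable (F) in
lemma yGen_eq (q : L) : yGen F q = ∏ s ∈ (genSet q).image Sum.inr, X s := by
  rw [Finset.prod_image (fun a _ b _ h => Sum.inr_injective h), genSet, Finset.prod_filter, yGen]

variable (F) in
lemma dual_span_eq (M : Set L) :
    dualIdeal (Ideal.span (uMon F '' M)) =
      Ideal.span {m : MvPolynomial (PP ⊕ PP) F |
        ∃ T : Finset (PP ⊕ PP), m = ∏ s ∈ T, X s ∧ ∀ w ∈ M, ∃ s ∈ T, s ∈ sFin w} := by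
  rw [dualIdeal]
  congr 1
  ext m
  simp only [Set.mem_setOf_eq]
  refine exists_congr fun T => and_congr_right fun _ => ⟨fun h w hw => ?_, fun h T' hT' => ?_⟩
  · obtain ⟨s, hs⟩ := h (sFin w) (by rw [← uMon_eq]; exact Ideal.subset_span ⟨w, hw, rfl⟩)
    rw [mem_inter''] at hs
    exact ⟨s, hs.1, hs.2⟩
  · have himg : ((fun A => ∏ s ∈ A, X s : Finset (PP ⊕ PP) → MvPolynomial (PP ⊕ PP) F) ''
        (sFin '' M)) = uMon F '' M := by
      rw [Set.image_image]
      exact Set.image_congr fun w _ => (uMon_eq F w).symm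
    rw [← himg] at hT'
    obtain ⟨A, ⟨w, hw, rfl⟩, hsub⟩ := prod_X_mem_span_iff.mp hT'
    obtain ⟨s, hs1, hs2⟩ := h w hw
    exact ⟨s, mem_inter''.mpr ⟨hs1, hsub hs2⟩⟩

end StmtAux

end MonAux

open StmtAux in
open Classical in
/-- Theorem 4.2: for a poset ideal `I` of a finite distributive lattice `L`,
`(H_I)* = (H_L)* + (∏_{r ∈ G(ℓ(q))} y_r : q ∈ L∖I)`. -/
theorem stmt15 {L : Type*} [Fintype L] [DistribLattice L] (F : Type*) [Field F]
    (I : Set L) (hI : IsLowerSet I) :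
    dualIdeal (Ideal.span (uMon F '' I)) =
      dualIdeal (Ideal.span (uMon F '' (Set.univ : Set L))) ⊔
        Ideal.span {m | ∃ q ∈ Iᶜ, m = yGen F q} := by
  rw [dual_span_eq F I, dual_span_eq F (Set.univ : Set L)]
  apply le_antisymm
  · rw [Ideal.span_le]
    rintro m ⟨T, rfl, hT⟩
    by_cases hall : ∀ q : L, ∃ s ∈ T, s ∈ sFin q
    · exact Ideal.mem_sup_left (Ideal.subset_span ⟨T, rfl, fun w _ => hall w⟩)
    push_neg at hall
    obtain ⟨q, hdis⟩ := hall
    -- the bottom element of `L`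
    set bot : L := Finset.univ.inf' ⟨q, Finset.mem_univ q⟩ id with hbotdef
    have hbotle : ∀ x : L, bot ≤ x := fun x => Finset.inf'_le id (Finset.mem_univ x)
    have hbotnotJI : ¬ JoinIrred bot := fun h =>
      h ⟨fun r hr => hr.le, fun w _ => hbotle w⟩
    by_cases hIn : I.Nonempty
    · -- main case: construct `q' ∉ I` whose `yGen` divides the monomial of `T`
      obtain ⟨w0, hw0⟩ := hIn
      have hbotI : bot ∈ I := hI (hbotle w0) hw0
      obtain ⟨s0, hs01, hs02⟩ := hT bot hbotI
      -- `s0` must be of the form `Sum.inr b0`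
      obtain ⟨b0, hb0⟩ : ∃ b0 : {p : L // JoinIrred p}, Sum.inr b0 ∈ T := by
        rcases s0 with p | p
        · exfalso
          have he : (p : L) = bot := le_antisymm (inl_mem_sFin.mp hs02) (hbotle (p : L))
          exact hbotnotJI (he ▸ p.2)
        · exact ⟨p, hs01⟩
      -- every `b` with `y_b` in the monomial satisfies `b ≤ q`
      have hB : ∀ b : {p : L // JoinIrred p}, Sum.inr b ∈ T → (b : L) ≤ q := fun b hb =>
        by_contra fun hnb => hdis _ hb (inr_mem_sFin.mpr hnb)
      set J : Finset {p : L // JoinIrred p} :=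
        Finset.univ.filter
          (fun p : {p : L // JoinIrred p} =>
            ∃ b : {p : L // JoinIrred p}, Sum.inr b ∈ T ∧ (p : L) ≤ (b : L)) with hJdef
      have hJmem : ∀ p : {p : L // JoinIrred p}, p ∈ J ↔
          ∃ b : {p : L // JoinIrred p}, Sum.inr b ∈ T ∧ (p : L) ≤ (b : L) := fun p => by
        rw [hJdef, Finset.mem_filter]
        simp [Finset.mem_univ]
      have hJne : J.Nonempty := ⟨b0, (hJmem b0).mpr ⟨b0, hb0, le_rfl⟩⟩
      set q' : L := J.sup' hJne (fun p => (p : L)) with hq'def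
      have hJl : ∀ p : {p : L // JoinIrred p}, p ∈ J → (p : L) ≤ q' := fun p hp =>
        Finset.le_sup' _ hp
      have hlq' : ∀ p : {p : L // JoinIrred p}, (p : L) ≤ q' → p ∈ J := fun p hp => by
        obtain ⟨j, hj, hpj⟩ := StmtAux.joinIrred_le_sup' hJne _ p.2 hp
        obtain ⟨b, hbT, hjb⟩ := (hJmem j).mp hj
        exact (hJmem p).mpr ⟨b, hbT, hpj.trans hjb⟩
      have hq'I : q' ∉ I := by
        intro hmem
        obtain ⟨s, hs1, hs2⟩ := hT q' hmem
        rcases s with p | p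
        · have hpq' : (p : L) ≤ q' := inl_mem_sFin.mp hs2
          obtain ⟨b, hbT, hpb⟩ := (hJmem p).mp (hlq' p hpq')
          exact hdis _ hs1 (inl_mem_sFin.mpr (hpb.trans (hB b hbT)))
        · have hpq' : ¬ (p : L) ≤ q' := inr_mem_sFin.mp hs2
          exact hpq' (hJl p ((hJmem p).mpr ⟨p, hs1, le_rfl⟩))
      -- the generators of `ℓ(q')` all appear (as `y`'s) in the monomial of `T`
      have hGsub : (genSet q').image Sum.inr ⊆ T := by
        intro s hsmem
        rw [Finset.mem_image] at hsmem
        obtain ⟨r, hr, rfl⟩ := hsmem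
        rw [genSet, Finset.mem_filter] at hr
        obtain ⟨-, h1, h2⟩ := hr
        obtain ⟨b, hbT, hrb⟩ := (hJmem r).mp (hlq' r h1)
        have hbq' : (b : L) ≤ q' := hJl b ((hJmem b).mpr ⟨b, hbT, le_rfl⟩)
        have := h2 b hbq' hrb
        rwa [this] at hbT
      have hsplit : (∏ s ∈ T, X s : MvPolynomial _ F) =
          yGen F q' * ∏ s ∈ T \ (genSet q').image Sum.inr, X s := by
        rw [yGen_eq, mul_comm, Finset.prod_sdiff hGsub]
      rw [hsplit]
      exact Ideal.mem_sup_right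
        (Ideal.mul_mem_right _ _ (Ideal.subset_span ⟨q', hq'I, rfl⟩))
    · -- `I = ∅`: then `yGen F bot = 1` and `bot ∈ Iᶜ`
      have hyb : yGen F bot = 1 := by
        rw [yGen]
        refine Finset.prod_eq_one fun r _ => ?_
        rw [if_neg]
        rintro ⟨h1, -⟩
        exact hbotnotJI (((hbotle (r : L)).antisymm h1) ▸ r.2)
      have hbotI : bot ∈ Iᶜ := fun h => hIn ⟨bot, h⟩
      have : (∏ s ∈ T, X s : MvPolynomial _ F) = yGen F bot * ∏ s ∈ T, X s := by
        rw [hyb, one_mul]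
      rw [this]
      exact Ideal.mem_sup_right
        (Ideal.mul_mem_right _ _ (Ideal.subset_span ⟨bot, hbotI, rfl⟩))
  · apply sup_le
    · exact Ideal.span_mono fun m ⟨T, hm, h⟩ => ⟨T, hm, fun w _ => h w (Set.mem_univ w)⟩
    · rw [Ideal.span_le]
      rintro m ⟨qq, hqc, rfl⟩
      refine Ideal.subset_span ⟨(genSet qq).image Sum.inr, yGen_eq F qq, ?_⟩
      intro w hw
      by_contra hne
      push_neg at hne
      have hdis : ∀ s, s ∈ (genSet qq).image Sum.inr → s ∉ sFin w := hne
      have hqw : qq ≤ w := by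
        refine StmtAux.birkhoff fun p hp hpq => ?_
        obtain ⟨r, hr1, hr2, hr3⟩ := StmtAux.exists_max qq ⟨p, hp⟩ hpq
        have hrw : (r : L) ≤ w := by
          by_contra hrw
          refine hdis (Sum.inr r) ?_ (inr_mem_sFin.mpr hrw)
          rw [Finset.mem_image]
          exact ⟨r, by rw [genSet, Finset.mem_filter]; exact ⟨Finset.mem_univ r, hr1, hr3⟩, rfl⟩
        exact le_trans (show (⟨p, hp⟩ : {p : L // JoinIrred p}) ≤ r from hr2) hrw
      exact hqc (hI hqw hw)
end
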